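/- Let f : [ℓ,u] → ℝ be L_f-Lipschitz. Let the coarse uniform grid on [ℓ,u] have I ≥ 2 points and the fine uniform grid have J = 2I − 1 points. Let x*_fine ∈ ℝ^J and x*_coarse ∈ ℝ^I be the exact samples of f on the fine and coarse grids, let δ ∈ ℝ^I, and let x = midpoint linear interpolation of (x*_coarse + δ) ∈ ℝ^J. Then ‖x − x*_fine‖₂ ≤ √2·‖δ‖₂ + L_f·(u − ℓ)/(2·√(I − 1)). -/

import Mathlib

open Finset

/-- Uniform grid with `I` points on `[l, u]` (0-indexed): `t[i] = l + i·(u−l)/(I−1)`. -/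
noncomputable def unifGrid (l u : ℝ) (I : ℕ) (i : ℕ) : ℝ := l + i * (u - l) / ((I : ℝ) - 1)

/-- Midpoint linear interpolation (0-indexed): even entries copy `x`, odd entries are midpoints. -/
noncomputable def midInterp (x : ℕ → ℝ) (j : ℕ) : ℝ :=
  if j % 2 = 0 then x (j / 2) else (x (j / 2) + x (j / 2 + 1)) / 2

/-!
The error splits into the interpolation error of the exact coarse samples and the interpolated
perturbation, and Minkowski's inequality adds their `ℓ²` norms. Interpolation copies each `δ i`
once and uses it in at most two midpoints, each contributing at most `δ i ^ 2 / 2`, so its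
`ℓ²` norm grows by at most `√2`. The exact samples are reproduced at the even fine points, and
at each of the `I - 1` midpoints the Lipschitz bound gives an error of at most `L h / 2`, where
`h = (u - l) / (I - 1)` is the coarse step; hence an `ℓ²` error of at most
`√(I - 1) · L h / 2 = L (u - l) / (2 √(I - 1))`.
-/

section SumSq

variable {ι : Type*}

theorem Real.sqrt_sum_sq_add_le (s : Finset ι) (a b : ι → ℝ) :
    √(∑ i ∈ s, (a i + b i) ^ 2) ≤ √(∑ i ∈ s, a i ^ 2) + √(∑ i ∈ s, b i ^ 2) := by
  have hA : 0 ≤ ∑ i ∈ s, a i ^ 2 := sum_nonneg fun _ _ => sq_nonneg _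
  have hB : 0 ≤ ∑ i ∈ s, b i ^ 2 := sum_nonneg fun _ _ => sq_nonneg _
  refine Real.sqrt_le_iff.2 ⟨by positivity, ?_⟩
  have hCS := Real.sum_mul_le_sqrt_mul_sqrt s a b
  calc ∑ i ∈ s, (a i + b i) ^ 2
      = ∑ i ∈ s, a i ^ 2 + 2 * ∑ i ∈ s, a i * b i + ∑ i ∈ s, b i ^ 2 := by
        simp only [add_sq, sum_add_distrib, mul_sum, mul_assoc]
    _ ≤ (√(∑ i ∈ s, a i ^ 2) + √(∑ i ∈ s, b i ^ 2)) ^ 2 := by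
        rw [add_sq, Real.sq_sqrt hA, Real.sq_sqrt hB]
        linarith

theorem Real.sqrt_sum_sq_le_of_abs_le {s : Finset ι} {a : ι → ℝ} {c : ℝ}
    (h : ∀ i ∈ s, |a i| ≤ c) : √(∑ i ∈ s, a i ^ 2) ≤ √(#s : ℝ) * c := by
  rcases s.eq_empty_or_nonempty with rfl | ⟨i, hi⟩
  · simp
  have hc : 0 ≤ c := (abs_nonneg _).trans (h i hi)
  rw [← Real.sqrt_sq hc, ← Real.sqrt_mul (Nat.cast_nonneg _)]
  refine Real.sqrt_le_sqrt ?_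
  calc ∑ i ∈ s, a i ^ 2 ≤ ∑ _i ∈ s, c ^ 2 :=
        sum_le_sum fun i hi => sq_le_sq' (abs_le.1 (h i hi)).1 (abs_le.1 (h i hi)).2
    _ = #s * c ^ 2 := by rw [sum_const, nsmul_eq_mul]

end SumSq

theorem Finset.sum_range_two_mul_add_one {M : Type*} [AddCommMonoid M] (g : ℕ → M) (n : ℕ) :
    ∑ j ∈ range (2 * n + 1), g j = ∑ i ∈ range (n + 1), g (2 * i) + ∑ i ∈ range n, g (2 * i + 1) := by
  induction n with
  | zero => simp
  | succ n ih =>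
    rw [show 2 * (n + 1) + 1 = 2 * n + 1 + 1 + 1 by ring, sum_range_succ, sum_range_succ, ih,
      sum_range_succ (fun i => g (2 * i)) (n + 1), sum_range_succ (fun i => g (2 * i + 1)) n,
      show 2 * (n + 1) = 2 * n + 1 + 1 by ring]
    abel

section MidInterp

theorem midInterp_two_mul (x : ℕ → ℝ) (i : ℕ) : midInterp x (2 * i) = x i := by
  simp [midInterp]

theorem midInterp_two_mul_add_one (x : ℕ → ℝ) (i : ℕ) :
    midInterp x (2 * i + 1) = (x i + x (i + 1)) / 2 := by
  simp [midInterp, Nat.mul_add_div]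

theorem midInterp_add (x y : ℕ → ℝ) (j : ℕ) :
    midInterp (fun i => x i + y i) j = midInterp x j + midInterp y j := by
  unfold midInterp
  split_ifs <;> ring

theorem sum_midInterp_sq_le (x : ℕ → ℝ) (n : ℕ) :
    ∑ j ∈ range (2 * n + 1), midInterp x j ^ 2 ≤ 2 * ∑ i ∈ range (n + 1), x i ^ 2 := by
  have hmid : ∀ i, ((x i + x (i + 1)) / 2) ^ 2 ≤ (x i ^ 2 + x (i + 1) ^ 2) / 2 := fun i => by
    nlinarith [sq_nonneg (x i - x (i + 1))]
  have hodd : ∑ i ∈ range n, midInterp x (2 * i + 1) ^ 2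
      ≤ (∑ i ∈ range n, x i ^ 2 + ∑ i ∈ range n, x (i + 1) ^ 2) / 2 := by
    rw [← sum_add_distrib, sum_div]
    exact sum_le_sum fun i _ => (midInterp_two_mul_add_one x i).symm ▸ hmid i
  have hlast := sum_range_succ (fun i => x i ^ 2) n
  have hfirst := sum_range_succ' (fun i => x i ^ 2) n
  simp only [sum_range_two_mul_add_one, midInterp_two_mul]
  nlinarith [sq_nonneg (x 0), sq_nonneg (x n)]

theorem sqrt_sum_midInterp_sq_le (x : ℕ → ℝ) (n : ℕ) :
    √(∑ j ∈ range (2 * n + 1), midInterp x j ^ 2) ≤ √2 * √(∑ i ∈ range (n + 1), x i ^ 2) := by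
  rw [← Real.sqrt_mul zero_le_two]
  exact Real.sqrt_le_sqrt (sum_midInterp_sq_le x n)

end MidInterp

section UnifGrid

variable (l u : ℝ)

theorem unifGrid_add_one (n i : ℕ) : unifGrid l u (n + 1) i = l + i * (u - l) / n := by
  simp [unifGrid]

theorem unifGrid_two_mul (m i : ℕ) :
    unifGrid l u (2 * m + 1) (2 * i) = unifGrid l u (m + 1) i := by
  simp only [unifGrid_add_one]
  push_cast
  rw [mul_assoc, mul_div_mul_left _ _ two_ne_zero]

theorem unifGrid_two_mul_add_one (m i : ℕ) :
    unifGrid l u (2 * m + 1) (2 * i + 1) =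
      (unifGrid l u (m + 1) i + unifGrid l u (m + 1) (i + 1)) / 2 := by
  simp only [unifGrid_add_one]
  push_cast
  ring

theorem unifGrid_succ_sub (n i : ℕ) :
    unifGrid l u (n + 1) (i + 1) - unifGrid l u (n + 1) i = (u - l) / n := by
  simp only [unifGrid_add_one]
  push_cast
  ring

variable {l u}

theorem unifGrid_mem_Icc (hlu : l ≤ u) {n i : ℕ} (hi : i ≤ n) :
    unifGrid l u (n + 1) i ∈ Set.Icc l u := by
  have hlu' : 0 ≤ u - l := sub_nonneg.2 hlu
  have hfrac : (i : ℝ) / n ≤ 1 := div_le_one_of_le₀ (by exact_mod_cast hi) n.cast_nonneg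
  rw [unifGrid_add_one, mul_comm, mul_div_assoc]
  constructor <;> nlinarith [div_nonneg (Nat.cast_nonneg (α := ℝ) i) n.cast_nonneg]

end UnifGrid

theorem abs_avg_sub_midpoint_le {s : Set ℝ} {f : ℝ → ℝ} {L a b : ℝ}
    (hf : ∀ x ∈ s, ∀ y ∈ s, |f x - f y| ≤ L * |x - y|) (ha : a ∈ s) (hb : b ∈ s)
    (hab : (a + b) / 2 ∈ s) : |(f a + f b) / 2 - f ((a + b) / 2)| ≤ L * |b - a| / 2 := by
  have h₁ := hf a ha _ hab
  have h₂ := hf b hb _ hab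
  rw [show a - (a + b) / 2 = -((b - a) / 2) by ring, abs_neg, abs_div, abs_two] at h₁
  rw [show b - (a + b) / 2 = (b - a) / 2 by ring, abs_div, abs_two] at h₂
  calc |(f a + f b) / 2 - f ((a + b) / 2)|
      = |(f a - f ((a + b) / 2)) + (f b - f ((a + b) / 2))| / 2 := by
        rw [← abs_two, ← abs_div]; ring_nf
    _ ≤ L * |b - a| / 2 := by
        linarith [abs_add_le (f a - f ((a + b) / 2)) (f b - f ((a + b) / 2))]

theorem sqrt_sum_midInterp_sub_sq_le {l u L : ℝ} {f : ℝ → ℝ} (hlu : l ≤ u)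
    (hf : ∀ s ∈ Set.Icc l u, ∀ t ∈ Set.Icc l u, |f s - f t| ≤ L * |s - t|)
    (m : ℕ) (xcoarse xfine : ℕ → ℝ)
    (hxc : ∀ i < m + 1, xcoarse i = f (unifGrid l u (m + 1) i))
    (hxf : ∀ j < 2 * m + 1, xfine j = f (unifGrid l u (2 * m + 1) j)) :
    √(∑ j ∈ range (2 * m + 1), (midInterp xcoarse j - xfine j) ^ 2) ≤
      L * (u - l) / (2 * √m) := by
  have heven : ∀ i ∈ range (m + 1), (midInterp xcoarse (2 * i) - xfine (2 * i)) ^ 2 = 0 := by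
    intro i hi
    have hi := mem_range.1 hi
    rw [midInterp_two_mul, hxc i hi, hxf _ (by omega), unifGrid_two_mul, sub_self, sq, zero_mul]
  have hodd : ∀ i ∈ range m,
      |midInterp xcoarse (2 * i + 1) - xfine (2 * i + 1)| ≤ L * ((u - l) / m) / 2 := by
    intro i hi
    have hi := mem_range.1 hi
    rw [midInterp_two_mul_add_one, hxc i (by omega), hxc (i + 1) (by omega), hxf _ (by omega),
      unifGrid_two_mul_add_one]
    convert abs_avg_sub_midpoint_le hf (unifGrid_mem_Icc hlu hi.le) (unifGrid_mem_Icc hlu hi)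
      (unifGrid_two_mul_add_one l u m i ▸ unifGrid_mem_Icc hlu (by omega)) using 3
    rw [unifGrid_succ_sub, abs_of_nonneg (div_nonneg (sub_nonneg.2 hlu) m.cast_nonneg)]
  rw [sum_range_two_mul_add_one, sum_eq_zero heven, zero_add]
  calc _ ≤ √(#(range m) : ℝ) * (L * ((u - l) / m) / 2) := Real.sqrt_sum_sq_le_of_abs_le hodd
    _ = L * (u - l) / 2 * (√m / m) := by rw [card_range]; ring
    _ = L * (u - l) / (2 * √m) := by rw [Real.sqrt_div_self']; ring

/-- Inexact interpolation error bound. -/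
theorem inexact_interpolation
    (l u : ℝ) (hlu : l < u) (I : ℕ) (hI : 2 ≤ I)
    (f : ℝ → ℝ) (Lf : ℝ)
    (hfLip : ∀ s ∈ Set.Icc l u, ∀ t ∈ Set.Icc l u, |f s - f t| ≤ Lf * |s - t|)
    (xcoarse xfine δ : ℕ → ℝ)
    (hxc : ∀ i < I, xcoarse i = f (unifGrid l u I i))
    (hxf : ∀ j < 2 * I - 1, xfine j = f (unifGrid l u (2 * I - 1) j)) :
    Real.sqrt (∑ j ∈ range (2 * I - 1),
        (midInterp (fun i => xcoarse i + δ i) j - xfine j) ^ 2) ≤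
      Real.sqrt 2 * Real.sqrt (∑ i ∈ range I, δ i ^ 2) +
        Lf * (u - l) / (2 * Real.sqrt ((I : ℝ) - 1)) := by
  obtain ⟨m, rfl⟩ : ∃ m, I = m + 1 := ⟨I - 1, by omega⟩
  rw [show 2 * (m + 1) - 1 = 2 * m + 1 by omega] at hxf ⊢
  push_cast
  rw [add_sub_cancel_right]
  have hsplit : ∀ j, midInterp (fun i => xcoarse i + δ i) j - xfine j =
      (midInterp xcoarse j - xfine j) + midInterp δ j := fun j => by
    rw [midInterp_add]; ring
  simp only [hsplit]
  calc _ ≤ _ := Real.sqrt_sum_sq_add_le _ _ _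
    _ ≤ Lf * (u - l) / (2 * √m) + √2 * √(∑ i ∈ range (m + 1), δ i ^ 2) := add_le_add
        (sqrt_sum_midInterp_sub_sq_le hlu.le hfLip m xcoarse xfine hxc hxf)
        (sqrt_sum_midInterp_sq_le δ m)
    _ = _ := add_comm _ _
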